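/- arXiv:2604.19067 — 2 statements merged into one kernel-verified Lean document; each statement's English description precedes it below -/
import Mathlib

section
/- Let d(u,v) = min(|u−v|, 1−|u−v|) denote the periodic distance on [0,1]. Suppose 0 ≤ r_d ≤ r_s ≤ 2r_d and r_s ≤ 1/4. Then for every x ∈ [0,1], the integral over (y,z) ∈ [0,1]² (with respect to Lebesgue measure) of 1[d(x,y) ≤ r_s]·1[d(x,z) ≤ r_d]·1[d(y,z) ≤ r_d] equals 4 r_s r_d − r_s². (This is the mixed-triangle probability in the geometric block model conditioned on the location of one of the two vertices belonging to the same community, in the regime r_d ≤ r_s < 2r_d.) -/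
/-!
Identify `pdist u v` with the norm of `v - u` in `UnitAddCircle`. Every integrand then becomes
1-periodic, so each integral over `[0,1]` may be taken over the window `[-1/2, 1/2]` instead,
where the circle norm is `|t|`. For fixed `y`, the `z`-integral is the length `2 r_d - d(x,y)` of
the intersection of two arcs of radius `r_d` (they meet since `d(x,y) ≤ r_s ≤ 2 r_d`, and they do
not wrap around since `r_d ≤ 1/4`). Integrating this against `1[d(x,y) ≤ r_s]` gives
`∫_{-r_s}^{r_s} (2 r_d - |t|) dt = 4 r_s r_d - r_s²`.
-/

open MeasureTheory

noncomputable section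

/-- The periodic distance on `[0,1]`: `d(u,v) = min(|u-v|, 1-|u-v|)`. -/
def pdist (u v : ℝ) : ℝ := min |u - v| (1 - |u - v|)

open Set Function intervalIntegral

lemma UnitAddCircle.norm_coe_of_abs_le_one {t : ℝ} (ht : |t| ≤ 1) :
    ‖(t : UnitAddCircle)‖ = min |t| (1 - |t|) := by
  have norm_coe {s : ℝ} (hs : |s| ≤ 1 / 2) : ‖(s : UnitAddCircle)‖ = |s| :=
    (AddCircle.norm_coe_eq_abs_iff 1 one_ne_zero).mpr (by simpa using hs)
  rcases le_total |t| (1 / 2) with h | h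
  · rw [min_eq_left (by linarith), norm_coe h]
  rw [min_eq_right (by linarith)]
  obtain ⟨ht₁, ht₂⟩ := abs_le.mp ht
  rcases le_total 0 t with h0 | h0
  · rw [abs_of_nonneg h0] at h ⊢
    nth_rw 1 [← sub_add_cancel t 1]
    rw [AddCircle.coe_add_period, norm_coe (abs_le.mpr ⟨by linarith, by linarith⟩),
      abs_of_nonpos (by linarith)]
    ring
  · rw [abs_of_nonpos h0] at h ⊢
    rw [← AddCircle.coe_add_period 1 t, norm_coe (abs_le.mpr ⟨by linarith, by linarith⟩),
      abs_of_nonneg (by linarith)]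
    ring

lemma UnitAddCircle.norm_coe_le_iff {r t : ℝ} (hr : 0 ≤ r) (ht : |t| < 1 - r) :
    ‖(t : UnitAddCircle)‖ ≤ r ↔ |t| ≤ r := by
  rw [norm_coe_of_abs_le_one (by linarith), min_le_iff]
  exact ⟨fun h => h.resolve_right (by linarith), Or.inl⟩

lemma pdist_eq_norm_coe_sub {u v : ℝ} (hu : u ∈ Icc (0 : ℝ) 1) (hv : v ∈ Icc (0 : ℝ) 1) :
    pdist u v = ‖((v - u : ℝ) : UnitAddCircle)‖ := by
  rw [UnitAddCircle.norm_coe_of_abs_le_one, pdist, abs_sub_comm]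
  exact abs_le.mpr ⟨by linarith [hu.2, hv.1], by linarith [hu.1, hv.2]⟩

lemma intervalIntegral_comp_sub_eq_of_periodic {g : ℝ → ℝ} (hg : Periodic g 1) (x : ℝ) :
    ∫ y in (0 : ℝ)..1, g (y - x) = ∫ t in -(1 / 2 : ℝ)..1 / 2, g t := by
  rw [integral_comp_sub_right, zero_sub, show (1 : ℝ) - x = -x + 1 by ring,
    hg.intervalIntegral_add_eq (-x) (-(1 / 2))]
  norm_num

lemma intervalIntegral_indicator_Icc {f : ℝ → ℝ} {a b c d : ℝ} (hac : a < c) (hcd : c ≤ d)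
    (hdb : d ≤ b) : ∫ t in a..b, (Icc c d).indicator f t = ∫ t in c..d, f t := by
  rw [integral_of_le (hac.le.trans (hcd.trans hdb)), setIntegral_indicator measurableSet_Icc,
    inter_eq_right.mpr (Icc_subset_Ioc_iff hcd |>.mpr ⟨hac, hdb⟩), integral_Icc_eq_integral_Ioc,
    ← integral_of_le hcd]

lemma integral_abs_symm {r : ℝ} (hr : 0 ≤ r) : ∫ t in -r..r, |t| = r ^ 2 := by
  have half : ∫ t in (0 : ℝ)..r, |t| = r ^ 2 / 2 := by
    rw [integral_congr fun t ht => abs_of_nonneg (uIcc_of_le hr ▸ ht).1, integral_id]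
    ring
  have hint (a b : ℝ) : IntervalIntegrable (fun t : ℝ => |t|) volume a b :=
    continuous_abs.intervalIntegrable a b
  rw [← integral_add_adjacent_intervals (hint (-r) 0) (hint 0 r), ← neg_zero,
    ← integral_comp_neg, neg_zero]
  simp only [abs_neg, half]
  ring

def arcIndicator (r t : ℝ) : ℝ := if ‖(t : UnitAddCircle)‖ ≤ r then 1 else 0

lemma periodic_arcIndicator (r : ℝ) : Periodic (arcIndicator r) 1 := fun t => by
  simp only [arcIndicator, AddCircle.coe_add_period]

@[fun_prop]
lemma measurable_arcIndicator (r : ℝ) : Measurable (arcIndicator r) :=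
  Measurable.ite (measurableSet_le (by fun_prop) measurable_const) measurable_const
    measurable_const

lemma arcIndicator_eq_indicator {r t : ℝ} (hr : 0 ≤ r) (ht : |t| < 1 - r) :
    arcIndicator r t = (Icc (-r) r).indicator 1 t := by
  simp only [arcIndicator, UnitAddCircle.norm_coe_le_iff hr ht, indicator_apply, mem_Icc, abs_le,
    Pi.one_apply]

lemma integral_arcIndicator_sub_mul_sub_norm {r s : ℝ} (hr0 : 0 ≤ r) (hr : r < 1 / 2) (x : ℝ) :
    ∫ y in (0 : ℝ)..1, arcIndicator r (y - x) * (s - ‖((y - x : ℝ) : UnitAddCircle)‖) =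
      2 * r * s - r ^ 2 := by
  have hg : Periodic (fun t => arcIndicator r t * (s - ‖(t : UnitAddCircle)‖)) 1 := fun t => by
    simp only [arcIndicator, AddCircle.coe_add_period]
  calc _ = ∫ t in -(1 / 2 : ℝ)..1 / 2, arcIndicator r t * (s - ‖(t : UnitAddCircle)‖) :=
        intervalIntegral_comp_sub_eq_of_periodic hg x
    _ = ∫ t in -(1 / 2 : ℝ)..1 / 2, (Icc (-r) r).indicator (fun t => s - |t|) t := by
        refine integral_congr fun t ht => ?_
        rw [uIcc_of_le (by norm_num)] at ht
        replace ht : |t| ≤ 1 / 2 := abs_le.mpr ht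
        rw [arcIndicator_eq_indicator hr0 (by linarith),
          (AddCircle.norm_coe_eq_abs_iff 1 one_ne_zero).mpr (by simpa using ht)]
        by_cases hmem : t ∈ Icc (-r) r <;> simp [hmem]
    _ = ∫ t in -r..r, (s - |t|) := intervalIntegral_indicator_Icc (by linarith) (by linarith) hr.le
    _ = 2 * r * s - r ^ 2 := by
        rw [integral_sub intervalIntegrable_const (continuous_abs.intervalIntegrable _ _),
          intervalIntegral.integral_const, integral_abs_symm hr0, smul_eq_mul]
        ring

lemma integral_arcIndicator_mul_arcIndicator_sub {r w : ℝ} (hr : r ≤ 1 / 4) (hw : |w| ≤ 1 / 2)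
    (hwr : |w| ≤ 2 * r) :
    ∫ t in -(1 / 2 : ℝ)..1 / 2, arcIndicator r t * arcIndicator r (t - w) = 2 * r - |w| := by
  have hr0 : 0 ≤ r := by linarith [abs_nonneg w]
  calc _ = ∫ t in -(1 / 2 : ℝ)..1 / 2, (Icc (max (-r) (w - r)) (min r (w + r))).indicator 1 t := by
        refine integral_congr_ae ?_
        -- For `r = 1/4` and `|w| = 1/2` the arcs also touch at the wrapped point `t = w ± 3/4`.
        filter_upwards [volume.ae_ne (w + (1 - r)), volume.ae_ne (w - (1 - r))] with t h₁ h₂ ht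
        rw [uIoc_of_le (by norm_num)] at ht
        rw [arcIndicator_eq_indicator hr0 (abs_lt.mpr ⟨by linarith [ht.1], by linarith [ht.2]⟩)]
        by_cases htr : t ∈ Icc (-r) r
        · obtain ⟨hw₁, hw₂⟩ := abs_le.mp hw
          have htw : |t - w| < 1 - r := by
            refine (abs_le.mpr ⟨by linarith [htr.1], by linarith [htr.2]⟩).lt_of_ne fun h => ?_
            rcases abs_eq (by linarith) |>.mp h with h | h
            exacts [h₁ (by linarith), h₂ (by linarith)]
          rw [arcIndicator_eq_indicator hr0 htw]
          simp only [indicator_apply, mem_Icc, Pi.one_apply, max_le_iff, le_min_iff, htr, if_true,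
            one_mul]
          exact if_congr ⟨fun h => ⟨⟨htr.1, by linarith [h.1]⟩, htr.2, by linarith [h.2]⟩,
            fun h => ⟨by linarith [h.1.2], by linarith [h.2.2]⟩⟩ rfl rfl
        · have : t ∉ Icc (max (-r) (w - r)) (min r (w + r)) := fun h =>
            htr ⟨(le_max_left _ _).trans h.1, h.2.trans (min_le_left _ _)⟩
          simp [htr, this]
    _ = 2 * r - |w| := by
        obtain ⟨hw₁, hw₂⟩ := abs_le.mp hwr
        rw [intervalIntegral_indicator_Icc (lt_max_of_lt_left (by linarith))
          (max_le (le_min (by linarith) (by linarith)) (le_min (by linarith) (by linarith)))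
          ((min_le_left _ _).trans (by linarith)), Pi.one_def, intervalIntegral.integral_const,
          smul_eq_mul, mul_one]
        rcases le_total 0 w with h | h
        · rw [max_eq_right (by linarith), min_eq_left (by linarith), abs_of_nonneg h]; ring
        · rw [max_eq_left (by linarith), min_eq_right (by linarith), abs_of_nonpos h]; ring

lemma integral_arcIndicator_sub_mul_arcIndicator_sub {r x y : ℝ} (hr : r ≤ 1 / 4)
    (hxy : ‖((y - x : ℝ) : UnitAddCircle)‖ ≤ 2 * r) :
    ∫ z in (0 : ℝ)..1, arcIndicator r (z - x) * arcIndicator r (z - y) =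
      2 * r - ‖((y - x : ℝ) : UnitAddCircle)‖ := by
  set w := y - x - round (y - x)
  have hnorm : ‖((y - x : ℝ) : UnitAddCircle)‖ = |w| := UnitAddCircle.norm_eq
  have hshift (z : ℝ) : arcIndicator r (z - y) = arcIndicator r (z - x - w) := by
    rw [show z - x - w = z - y + round (y - x) * 1 by ring, (periodic_arcIndicator r).int_mul]
  have hg : Periodic (fun t => arcIndicator r t * arcIndicator r (t - w)) 1 :=
    (periodic_arcIndicator r).mul ((periodic_arcIndicator r).sub_const w)
  simp only [hshift, hnorm]
  exact (intervalIntegral_comp_sub_eq_of_periodic hg x).trans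
    (integral_arcIndicator_mul_arcIndicator_sub hr (abs_sub_round _) (hnorm ▸ hxy))

lemma integrableOn_arcIndicator_triangle (r₁ r₂ r₃ x : ℝ) :
    IntegrableOn (fun p : ℝ × ℝ => arcIndicator r₁ (p.1 - x) * arcIndicator r₂ (p.2 - x) *
      arcIndicator r₃ (p.2 - p.1)) (Icc 0 1 ×ˢ Icc 0 1) (volume.prod volume) := by
  refine Measure.integrableOn_of_bounded (M := 1)
    (isCompact_Icc.prod isCompact_Icc).measure_lt_top.ne (by fun_prop) (ae_of_all _ fun p => ?_)
  simp only [arcIndicator]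
  split_ifs <;> norm_num

/-- Mixed-triangle probability in the geometric block model, conditioned on the
location `x` of one of the two vertices belonging to the same community, in the
regime `r_d ≤ r_s ≤ 2 r_d`: the integral over `(y,z) ∈ [0,1]²` of
`1[d(x,y) ≤ r_s] · 1[d(x,z) ≤ r_d] · 1[d(y,z) ≤ r_d]` equals `4 r_s r_d - r_s²`. -/
theorem mixed_triangle_prob_same_vertex (rs rd : ℝ) (hrd0 : 0 ≤ rd)
    (hds : rd ≤ rs) (hs2d : rs ≤ 2 * rd) (hs4 : rs ≤ 1 / 4)
    (x : ℝ) (hx : x ∈ Set.Icc (0 : ℝ) 1) :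
    (∫ p in Set.Icc (0 : ℝ) 1 ×ˢ Set.Icc (0 : ℝ) 1,
        (if pdist x p.1 ≤ rs then (1 : ℝ) else 0) *
        (if pdist x p.2 ≤ rd then (1 : ℝ) else 0) *
        (if pdist p.1 p.2 ≤ rd then (1 : ℝ) else 0)) = 4 * rs * rd - rs ^ 2 := by
  have hI : MeasurableSet (Icc (0 : ℝ) 1) := measurableSet_Icc
  calc _ = ∫ p in Icc (0 : ℝ) 1 ×ˢ Icc (0 : ℝ) 1, arcIndicator rs (p.1 - x) *
        arcIndicator rd (p.2 - x) * arcIndicator rd (p.2 - p.1) := by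
        refine setIntegral_congr_fun (hI.prod hI) fun p hp => ?_
        simp only [arcIndicator, pdist_eq_norm_coe_sub hx hp.1, pdist_eq_norm_coe_sub hx hp.2,
          pdist_eq_norm_coe_sub hp.1 hp.2]
    _ = ∫ y in Icc (0 : ℝ) 1, ∫ z in Icc (0 : ℝ) 1, arcIndicator rs (y - x) *
        arcIndicator rd (z - x) * arcIndicator rd (z - y) := by
        rw [Measure.volume_eq_prod,
          setIntegral_prod _ (integrableOn_arcIndicator_triangle rs rd rd x)]
    _ = ∫ y in (0 : ℝ)..1,
        arcIndicator rs (y - x) * (2 * rd - ‖((y - x : ℝ) : UnitAddCircle)‖) := by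
        rw [integral_of_le zero_le_one, ← integral_Icc_eq_integral_Ioc]
        refine setIntegral_congr_fun hI fun y _ => ?_
        rw [integral_Icc_eq_integral_Ioc, ← integral_of_le zero_le_one]
        simp only [mul_assoc, intervalIntegral.integral_const_mul]
        by_cases h : ‖((y - x : ℝ) : UnitAddCircle)‖ ≤ rs
        · rw [integral_arcIndicator_sub_mul_arcIndicator_sub (hds.trans hs4) (h.trans hs2d)]
        · rw [arcIndicator, if_neg h, zero_mul, zero_mul]
    _ = 4 * rs * rd - rs ^ 2 := by
        rw [integral_arcIndicator_sub_mul_sub_norm (hrd0.trans hds) (by linarith)]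
        ring
end
end

section
/- There exists an absolute constant C > 0 such that for every geometric block model G_n(r_s, r_d) with 0 ≤ r_d ≤ r_s ≤ 1/4, the centered number of ordered 2-paths P_n = Σ_{i≠j≠k} (A_ij A_jk − E[A_ij A_jk]) (sum over ordered triples of pairwise distinct vertices) satisfies E[P_n²] ≤ C·(n⁴ r_s³ + n³ r_s²). -/
/-!
Write `P_n = ∑_t (T_t - E T_t)` with `T_t = A_ij A_jk` for `t = (i, j, k)` pairwise distinct, so
that `E[P_n²] = ∑_{t,u} cov(T_t, T_u)`. Integrating out a vertex that is a leaf of the graph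
spanned by the edges in the integrand produces the factor `2r` whatever its neighbour's position,
because a ball of the periodic distance has measure `2r` for `r ≤ 1/2`. If the path `u` has two
vertices outside `t`, both can be peeled off in turn, which gives `E[T_t T_u] = E[T_t] E[T_u]`;
if it has one, `E[T_t T_u] ≤ (2 r_s)^3`; in every case `E[T_t T_u] ≤ (2 r_s)^2`. For a fixed `t`
there are `O(n)` triples `u` of the second kind and `O(1)` of the third.
-/

open MeasureTheory Finset

noncomputable section

/-- The law of `(X_1, …, X_n)`: the product of `n` uniform measures on `[0,1]`. -/
def gbmMeasure (n : ℕ) : Measure (Fin n → ℝ) :=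
  Measure.pi fun _ => volume.restrict (Set.Icc (0 : ℝ) 1)

/-- The adjacency matrix of the geometric block model `G_n(r_s, r_d)` with
communities `V₁ = {0,…,m-1}` and `V₂ = {m,…,n-1}`: `A i i = 0`, and for `i ≠ j`,
`A i j = 1[d(X_i,X_j) ≤ r_s]` if `i, j` are in the same community and
`A i j = 1[d(X_i,X_j) ≤ r_d]` otherwise. -/
def gbmA (n m : ℕ) (rs rd : ℝ) (X : Fin n → ℝ) (i j : Fin n) : ℝ :=
  if i = j then 0
  else if ((i : ℕ) < m ↔ (j : ℕ) < m) then
    (if pdist (X i) (X j) ≤ rs then 1 else 0)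
  else (if pdist (X i) (X j) ≤ rd then 1 else 0)

open ProbabilityTheory
open scoped ENNReal

theorem pdist_comm (u v : ℝ) : pdist u v = pdist v u := by
  rw [pdist, pdist, abs_sub_comm]

theorem measurableSet_pdist_le (r : ℝ) : MeasurableSet {p : ℝ × ℝ | pdist p.1 p.2 ≤ r} :=
  measurableSet_le (by unfold pdist; fun_prop) measurable_const

theorem pdist_eq_norm_coe {u v : ℝ} (h : |u - v| ≤ 1) :
    pdist u v = ‖((u - v : ℝ) : UnitAddCircle)‖ := by
  have hnorm (x : ℝ) : ‖(x : UnitAddCircle)‖ = |x| ↔ |x| ≤ 1 / 2 := by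
    simpa using AddCircle.norm_coe_eq_abs_iff (p := (1 : ℝ)) (x := x) one_ne_zero
  set z := u - v
  rcases le_or_gt |z| (1 / 2) with hz | hz
  · rw [(hnorm z).2 hz, pdist, min_eq_left (by linarith)]
  rw [pdist, min_eq_right (by linarith)]
  rcases le_or_gt 0 z with hz0 | hz0
  · rw [abs_of_nonneg hz0] at h hz ⊢
    have hz1 : |z - 1| = 1 - z := by rw [abs_of_nonpos (by linarith)]; ring
    have hshift := AddCircle.coe_add_period (1 : ℝ) (z - 1)
    rw [sub_add_cancel] at hshift
    rw [hshift, (hnorm _).2 (by linarith), hz1]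
  · rw [abs_of_neg hz0] at h hz ⊢
    have hz1 : |z + 1| = 1 - -z := by rw [abs_of_nonneg (by linarith)]; ring
    rw [← AddCircle.coe_add_period 1 z, (hnorm _).2 (by linarith), hz1]

theorem lintegral_pdist_le {x r : ℝ} (hx : x ∈ Set.Icc (0 : ℝ) 1) (hr : r ≤ 1 / 2) :
    ∫⁻ y, (if pdist x y ≤ r then 1 else 0 : ℝ≥0∞) ∂volume.restrict (Set.Icc (0 : ℝ) 1)
      = ENNReal.ofReal (2 * r) := by
  classical
  have hmk := AddCircle.measurePreserving_mk (1 : ℝ) 0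
  rw [zero_add] at hmk
  set ball := ((↑) : ℝ → UnitAddCircle) ⁻¹' Metric.closedBall (x : UnitAddCircle) r
  have hball : MeasurableSet ball := hmk.measurable measurableSet_closedBall
  have hpdist : ∀ y ∈ Set.Ioc (0 : ℝ) 1,
      (if pdist x y ≤ r then 1 else 0 : ℝ≥0∞) = ball.indicator 1 y := by
    intro y hy
    have hxy : |x - y| ≤ 1 :=
      abs_sub_le_iff.2 ⟨by linarith [hx.2, hy.1], by linarith [hx.1, hy.2]⟩
    rw [Set.indicator_apply, Set.mem_preimage, Metric.mem_closedBall, dist_comm,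
      dist_eq_norm, ← AddCircle.coe_sub, ← pdist_eq_norm_coe hxy, Pi.one_apply]
  rw [← Measure.restrict_congr_set Ioc_ae_eq_Icc, setLIntegral_congr_fun measurableSet_Ioc hpdist,
    lintegral_indicator_one hball, hmk.measure_preimage measurableSet_closedBall.nullMeasurableSet,
    AddCircle.volume_closedBall, min_eq_right (by linarith)]

theorem DependsOn.update_eq {ι α β : Type*} [DecidableEq ι] {G : (ι → α) → β} {S : Set ι}
    (hG : DependsOn G S) {v : ι} (hv : v ∉ S) (X : ι → α) (y : α) :
    G (Function.update X v y) = G X :=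
  hG fun _ hi => Function.update_of_ne (ne_of_mem_of_not_mem hi hv) y X

theorem DependsOn.mul {ι β : Type*} [Mul β] {α : ι → Type*} {f g : (Π i, α i) → β}
    {s t : Set ι} (hf : DependsOn f s) (hg : DependsOn g t) :
    DependsOn (fun x => f x * g x) (s ∪ t) := fun _ _ h =>
  congrArg₂ (· * ·) (hf fun i hi => h i (Or.inl hi)) (hg fun i hi => h i (Or.inr hi))

theorem lintegral_pi_mul_eq_of_dependsOn {ι α : Type*} [Fintype ι] [DecidableEq ι]
    [MeasurableSpace α] {μ : ι → Measure α} [∀ i, IsProbabilityMeasure (μ i)]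
    {f : α → α → ℝ≥0∞} (hf : Measurable (Function.uncurry f))
    {G : (ι → α) → ℝ≥0∞} (hG : Measurable G) {S : Set ι} (hGS : DependsOn G S)
    {a v : ι} (hav : a ≠ v) (hv : v ∉ S) :
    ∫⁻ X, f (X a) (X v) * G X ∂Measure.pi μ
      = ∫⁻ X, (∫⁻ y, f (X a) y ∂μ v) * G X ∂Measure.pi μ := by
  have hfv : Measurable fun X : ι → α => f (X a) (X v) :=
    hf.comp (f := fun X : ι → α => (X a, X v)) (by fun_prop)
  have hfa : Measurable fun X : ι → α => ∫⁻ y, f (X a) y ∂μ v :=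
    hf.lintegral_prod_right'.comp (measurable_pi_apply a)
  refine lintegral_eq_of_lmarginal_eq {v} (hfv.mul hG) (hfa.mul hG) ?_
  ext X
  simp only [lmarginal_singleton, Function.update_self, Function.update_of_ne hav,
    hGS.update_eq hv, lintegral_const, measure_univ, mul_one]
  exact lintegral_mul_const _ (hf.comp measurable_prodMk_left)

theorem memLp_of_nonneg_of_le_one {α : Type*} [MeasurableSpace α] {μ : Measure α}
    [IsFiniteMeasure μ] {f : α → ℝ} (hf : Measurable f) (h0 : 0 ≤ f) (h1 : f ≤ 1)
    (p : ℝ≥0∞) : MemLp f p μ :=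
  MemLp.of_bound hf.aestronglyMeasurable 1 <| ae_of_all _ fun x => by
    rw [Real.norm_eq_abs, abs_le]; exact ⟨by linarith [show 0 ≤ f x from h0 x], h1 x⟩

instance isProbabilityMeasure_volume_restrict_Icc :
    IsProbabilityMeasure (volume.restrict (Set.Icc (0 : ℝ) 1)) :=
  ⟨by simp⟩

instance (n : ℕ) : IsProbabilityMeasure (gbmMeasure n) := by
  unfold gbmMeasure; infer_instance

section leaf

variable {n : ℕ} {a v : Fin n} {r : ℝ} {S : Set (Fin n)}

theorem lintegral_pdist_le_mul (hav : a ≠ v) (hr : r ≤ 1 / 2) {G : (Fin n → ℝ) → ℝ≥0∞}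
    (hG : Measurable G) (hGS : DependsOn G S) (hv : v ∉ S) :
    ∫⁻ X, (if pdist (X a) (X v) ≤ r then 1 else 0 : ℝ≥0∞) * G X ∂gbmMeasure n
      = ENNReal.ofReal (2 * r) * ∫⁻ X, G X ∂gbmMeasure n := by
  have hf : Measurable (Function.uncurry fun x y : ℝ => (if pdist x y ≤ r then 1 else 0 : ℝ≥0∞)) :=
    Measurable.ite (measurableSet_pdist_le r) measurable_const measurable_const
  have hXa : ∀ᵐ X ∂gbmMeasure n, X a ∈ Set.Icc (0 : ℝ) 1 :=
    (measurePreserving_eval _ a).quasiMeasurePreserving.ae (ae_restrict_mem measurableSet_Icc)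
  rw [gbmMeasure, lintegral_pi_mul_eq_of_dependsOn hf hG hGS hav hv, ← gbmMeasure,
    lintegral_congr_ae (hXa.mono fun X hX => by rw [lintegral_pdist_le hX hr]),
    lintegral_const_mul _ hG]

theorem integral_pdist_le_mul (hav : a ≠ v) (hr0 : 0 ≤ r) (hr : r ≤ 1 / 2)
    {G : (Fin n → ℝ) → ℝ} (hG : Measurable G) (hG0 : 0 ≤ G) (hGS : DependsOn G S) (hv : v ∉ S) :
    ∫ X, (if pdist (X a) (X v) ≤ r then 1 else 0) * G X ∂gbmMeasure n
      = 2 * r * ∫ X, G X ∂gbmMeasure n := by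
  have hind : Measurable fun X : Fin n → ℝ => if pdist (X a) (X v) ≤ r then (1 : ℝ) else 0 :=
    Measurable.ite ((measurableSet_pdist_le r).preimage
      (f := fun X : Fin n → ℝ => (X a, X v)) (by fun_prop)) measurable_const measurable_const
  have hofReal (X : Fin n → ℝ) :
      ENNReal.ofReal ((if pdist (X a) (X v) ≤ r then 1 else 0) * G X)
        = (if pdist (X a) (X v) ≤ r then 1 else 0 : ℝ≥0∞) * ENNReal.ofReal (G X) := by
    split_ifs <;> simp
  have hind0 (X : Fin n → ℝ) : (0 : ℝ) ≤ if pdist (X a) (X v) ≤ r then 1 else 0 := by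
    split_ifs <;> norm_num
  rw [integral_eq_lintegral_of_nonneg_ae (ae_of_all _ fun X => mul_nonneg (hind0 X) (hG0 X))
      (hind.mul hG).aestronglyMeasurable,
    integral_eq_lintegral_of_nonneg_ae (ae_of_all _ hG0) hG.aestronglyMeasurable,
    lintegral_congr hofReal, lintegral_pdist_le_mul hav hr hG.ennreal_ofReal
      (fun _ _ h => congrArg ENNReal.ofReal (hGS h)) hv,
    ENNReal.toReal_mul, ENNReal.toReal_ofReal (by linarith)]

end leaf

def gbmRadius (m : ℕ) (rs rd : ℝ) {n : ℕ} (i j : Fin n) : ℝ :=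
  if ((i : ℕ) < m ↔ (j : ℕ) < m) then rs else rd

section gbmA

variable {n m : ℕ} {rs rd : ℝ}

theorem gbmRadius_comm (i j : Fin n) : gbmRadius m rs rd i j = gbmRadius m rs rd j i := by
  simp only [gbmRadius, Iff.comm]

theorem gbmRadius_nonneg (hrd : 0 ≤ rd) (hrs : rd ≤ rs) (i j : Fin n) :
    0 ≤ gbmRadius m rs rd i j := by
  unfold gbmRadius; split_ifs <;> linarith

theorem gbmRadius_le (hrs : rd ≤ rs) (i j : Fin n) : gbmRadius m rs rd i j ≤ rs := by
  unfold gbmRadius; split_ifs <;> linarith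

theorem gbmA_of_ne {i j : Fin n} (hij : i ≠ j) (X : Fin n → ℝ) :
    gbmA n m rs rd X i j = if pdist (X i) (X j) ≤ gbmRadius m rs rd i j then 1 else 0 := by
  unfold gbmA gbmRadius
  split_ifs <;> simp_all

theorem gbmA_comm (X : Fin n → ℝ) (i j : Fin n) : gbmA n m rs rd X i j = gbmA n m rs rd X j i := by
  rcases eq_or_ne i j with rfl | hij
  · rfl
  rw [gbmA_of_ne hij, gbmA_of_ne hij.symm, pdist_comm, gbmRadius_comm]

theorem gbmA_nonneg (X : Fin n → ℝ) (i j : Fin n) : 0 ≤ gbmA n m rs rd X i j := by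
  unfold gbmA; split_ifs <;> norm_num

theorem gbmA_le_one (X : Fin n → ℝ) (i j : Fin n) : gbmA n m rs rd X i j ≤ 1 := by
  unfold gbmA; split_ifs <;> norm_num

theorem measurable_gbmA (i j : Fin n) : Measurable fun X => gbmA n m rs rd X i j := by
  rcases eq_or_ne i j with rfl | hij
  · simp only [gbmA, if_true]; exact measurable_const
  simp only [gbmA_of_ne hij]
  exact Measurable.ite ((measurableSet_pdist_le _).preimage
    (f := fun X : Fin n → ℝ => (X i, X j)) (by fun_prop)) measurable_const measurable_const

theorem dependsOn_gbmA (i j : Fin n) :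
    DependsOn (fun X => gbmA n m rs rd X i j) {i, j} := fun X Y h => by
  simp only [gbmA, h i (by simp), h j (by simp)]

variable (hrd : 0 ≤ rd) (hrs : rd ≤ rs) (hrs2 : rs ≤ 1 / 2)
include hrd hrs hrs2

theorem integral_gbmA_mul {a v : Fin n} (hav : a ≠ v) {G : (Fin n → ℝ) → ℝ}
    (hG : Measurable G) (hG0 : 0 ≤ G) {S : Set (Fin n)} (hGS : DependsOn G S) (hv : v ∉ S) :
    ∫ X, gbmA n m rs rd X a v * G X ∂gbmMeasure n
      = 2 * gbmRadius m rs rd a v * ∫ X, G X ∂gbmMeasure n := by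
  simp only [gbmA_of_ne hav]
  exact integral_pdist_le_mul hav (gbmRadius_nonneg hrd hrs a v)
    ((gbmRadius_le hrs a v).trans hrs2) hG hG0 hGS hv

theorem integral_gbmA_mul_gbmA_mul {i j k : Fin n} (hij : i ≠ j) (hik : i ≠ k) (hjk : j ≠ k)
    {G : (Fin n → ℝ) → ℝ} (hG : Measurable G) (hG0 : 0 ≤ G) {S : Set (Fin n)}
    (hGS : DependsOn G S) (hfresh : i ∉ S ∧ j ∉ S ∨ i ∉ S ∧ k ∉ S ∨ j ∉ S ∧ k ∉ S) :
    ∫ X, gbmA n m rs rd X i j * gbmA n m rs rd X j k * G X ∂gbmMeasure n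
      = 2 * gbmRadius m rs rd i j * (2 * gbmRadius m rs rd j k) * ∫ X, G X ∂gbmMeasure n := by
  have hAG : ∀ a b : Fin n, Measurable fun X => gbmA n m rs rd X a b * G X :=
    fun a b => (measurable_gbmA a b).mul hG
  have hAG0 : ∀ a b : Fin n, 0 ≤ fun X => gbmA n m rs rd X a b * G X :=
    fun a b X => mul_nonneg (gbmA_nonneg X a b) (hG0 X)
  have hAGS : ∀ a b : Fin n, DependsOn (fun X => gbmA n m rs rd X a b * G X) ({a, b} ∪ S) :=
    fun a b => (dependsOn_gbmA a b).mul hGS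
  rcases hfresh with ⟨hi, hj⟩ | ⟨hi, hk⟩ | ⟨hj, hk⟩
  · calc _ = ∫ X, gbmA n m rs rd X j i * (gbmA n m rs rd X k j * G X) ∂gbmMeasure n := by
          simp only [gbmA_comm _ i j, gbmA_comm _ j k, mul_assoc]
      _ = _ := by
          rw [integral_gbmA_mul hrd hrs hrs2 hij.symm (hAG k j) (hAG0 k j) (hAGS k j)
            (by simp [hij, hik, hi]), integral_gbmA_mul hrd hrs hrs2 hjk.symm hG hG0 hGS hj,
            gbmRadius_comm j i, gbmRadius_comm k j]
          ring
  · calc _ = ∫ X, gbmA n m rs rd X j k * (gbmA n m rs rd X j i * G X) ∂gbmMeasure n := by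
          simp only [gbmA_comm _ i j, mul_comm (gbmA n m rs rd _ j i), mul_assoc]
      _ = _ := by
          rw [integral_gbmA_mul hrd hrs hrs2 hjk (hAG j i) (hAG0 j i) (hAGS j i)
            (by simp [hik.symm, hjk.symm, hk]),
            integral_gbmA_mul hrd hrs hrs2 hij.symm hG hG0 hGS hi, gbmRadius_comm j i]
          ring
  · calc _ = ∫ X, gbmA n m rs rd X j k * (gbmA n m rs rd X i j * G X) ∂gbmMeasure n := by
          simp only [mul_comm (gbmA n m rs rd _ i j), mul_assoc]
      _ = _ := by
          rw [integral_gbmA_mul hrd hrs hrs2 hjk (hAG i j) (hAG0 i j) (hAGS i j)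
            (by simp [hik.symm, hjk.symm, hk]), integral_gbmA_mul hrd hrs hrs2 hij hG hG0 hGS hj]
          ring

end gbmA

def twoPath (n m : ℕ) (rs rd : ℝ) (t : Fin n × Fin n × Fin n) (X : Fin n → ℝ) : ℝ :=
  if t.1 ≠ t.2.1 ∧ t.1 ≠ t.2.2 ∧ t.2.1 ≠ t.2.2 then
    gbmA n m rs rd X t.1 t.2.1 * gbmA n m rs rd X t.2.1 t.2.2
  else 0

section twoPath

variable {n m : ℕ} {rs rd : ℝ}

theorem twoPath_nonneg (t : Fin n × Fin n × Fin n) : 0 ≤ twoPath n m rs rd t := fun X => by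
  unfold twoPath; split_ifs
  · exact mul_nonneg (gbmA_nonneg X _ _) (gbmA_nonneg X _ _)
  · rfl

theorem twoPath_le_gbmA_left (t : Fin n × Fin n × Fin n) (X : Fin n → ℝ) :
    twoPath n m rs rd t X ≤ gbmA n m rs rd X t.1 t.2.1 := by
  unfold twoPath; split_ifs
  · exact mul_le_of_le_one_right (gbmA_nonneg X _ _) (gbmA_le_one X _ _)
  · exact gbmA_nonneg X _ _

theorem twoPath_le_gbmA_right (t : Fin n × Fin n × Fin n) (X : Fin n → ℝ) :
    twoPath n m rs rd t X ≤ gbmA n m rs rd X t.2.1 t.2.2 := by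
  unfold twoPath; split_ifs
  · exact mul_le_of_le_one_left (gbmA_nonneg X _ _) (gbmA_le_one X _ _)
  · exact gbmA_nonneg X _ _

theorem twoPath_le_one (t : Fin n × Fin n × Fin n) : twoPath n m rs rd t ≤ 1 := fun X =>
  (twoPath_le_gbmA_left t X).trans (gbmA_le_one X _ _)

theorem measurable_twoPath (t : Fin n × Fin n × Fin n) : Measurable (twoPath n m rs rd t) := by
  unfold twoPath; split_ifs
  · exact (measurable_gbmA _ _).mul (measurable_gbmA _ _)
  · exact measurable_const

theorem memLp_twoPath (t : Fin n × Fin n × Fin n) (p : ℝ≥0∞) :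
    MemLp (twoPath n m rs rd t) p (gbmMeasure n) :=
  memLp_of_nonneg_of_le_one (measurable_twoPath t) (twoPath_nonneg t) (twoPath_le_one t) p

theorem dependsOn_twoPath (t : Fin n × Fin n × Fin n) :
    DependsOn (twoPath n m rs rd t) {t.1, t.2.1, t.2.2} := by
  unfold twoPath; split_ifs
  · refine ((dependsOn_gbmA _ _).mul (dependsOn_gbmA _ _)).mono ?_
    intro x; simp only [Set.mem_union, Set.mem_insert_iff, Set.mem_singleton_iff]; tauto
  · exact (dependsOn_const _).mono (Set.empty_subset _)

theorem twoPath_sub_integral (t : Fin n × Fin n × Fin n) (X : Fin n → ℝ) :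
    twoPath n m rs rd t X - ∫ Y, twoPath n m rs rd t Y ∂gbmMeasure n
      = if t.1 ≠ t.2.1 ∧ t.1 ≠ t.2.2 ∧ t.2.1 ≠ t.2.2 then
          gbmA n m rs rd X t.1 t.2.1 * gbmA n m rs rd X t.2.1 t.2.2
            - ∫ Y, gbmA n m rs rd Y t.1 t.2.1 * gbmA n m rs rd Y t.2.1 t.2.2 ∂gbmMeasure n
        else 0 := by
  unfold twoPath; split_ifs <;> simp

theorem integral_twoPath_nonneg (t : Fin n × Fin n × Fin n) :
    0 ≤ ∫ X, twoPath n m rs rd t X ∂gbmMeasure n :=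
  integral_nonneg (twoPath_nonneg t)

variable (hrd : 0 ≤ rd) (hrs : rd ≤ rs) (hrs2 : rs ≤ 1 / 2)
include hrd hrs hrs2

theorem integral_twoPath {t : Fin n × Fin n × Fin n}
    (ht : t.1 ≠ t.2.1 ∧ t.1 ≠ t.2.2 ∧ t.2.1 ≠ t.2.2) :
    ∫ X, twoPath n m rs rd t X ∂gbmMeasure n
      = 2 * gbmRadius m rs rd t.1 t.2.1 * (2 * gbmRadius m rs rd t.2.1 t.2.2) := by
  have h := integral_gbmA_mul_gbmA_mul (m := m) hrd hrs hrs2 ht.1 ht.2.1 ht.2.2 measurable_const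
    (fun _ => zero_le_one) (dependsOn_const (1 : ℝ)) (by simp)
  simpa [twoPath, ht] using h

theorem integral_twoPath_le (t : Fin n × Fin n × Fin n) :
    ∫ X, twoPath n m rs rd t X ∂gbmMeasure n ≤ 4 * rs ^ 2 := by
  by_cases ht : t.1 ≠ t.2.1 ∧ t.1 ≠ t.2.2 ∧ t.2.1 ≠ t.2.2
  · rw [integral_twoPath hrd hrs hrs2 ht]
    have h1 := gbmRadius_nonneg (m := m) hrd hrs t.1 t.2.1
    have h2 := gbmRadius_nonneg (m := m) hrd hrs t.2.1 t.2.2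
    nlinarith [gbmRadius_le (m := m) hrs t.1 t.2.1, gbmRadius_le (m := m) hrs t.2.1 t.2.2]
  · simp only [twoPath, if_neg ht, integral_zero]; positivity

theorem integral_twoPath_mul {t : Fin n × Fin n × Fin n} {G : (Fin n → ℝ) → ℝ}
    (hG : Measurable G) (hG0 : 0 ≤ G) {S : Set (Fin n)} (hGS : DependsOn G S)
    (hfresh : t.1 ∉ S ∧ t.2.1 ∉ S ∨ t.1 ∉ S ∧ t.2.2 ∉ S ∨ t.2.1 ∉ S ∧ t.2.2 ∉ S) :
    ∫ X, twoPath n m rs rd t X * G X ∂gbmMeasure n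
      = (∫ X, twoPath n m rs rd t X ∂gbmMeasure n) * ∫ X, G X ∂gbmMeasure n := by
  by_cases ht : t.1 ≠ t.2.1 ∧ t.1 ≠ t.2.2 ∧ t.2.1 ≠ t.2.2
  · rw [integral_twoPath hrd hrs hrs2 ht, ← integral_gbmA_mul_gbmA_mul hrd hrs hrs2 ht.1 ht.2.1
      ht.2.2 hG hG0 hGS hfresh]
    simp only [twoPath, if_pos ht]
  · simp [twoPath, if_neg ht]

end twoPath

section covariance

variable {n m : ℕ} {rs rd : ℝ}

theorem covariance_twoPath_le_integral_mul (t u : Fin n × Fin n × Fin n) :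
    cov[twoPath n m rs rd t, twoPath n m rs rd u; gbmMeasure n]
      ≤ ∫ X, twoPath n m rs rd t X * twoPath n m rs rd u X ∂gbmMeasure n := by
  rw [covariance_eq_sub (memLp_twoPath t 2) (memLp_twoPath u 2)]
  exact sub_le_self _ (mul_nonneg (integral_twoPath_nonneg t) (integral_twoPath_nonneg u))

variable (hrd : 0 ≤ rd) (hrs : rd ≤ rs) (hrs2 : rs ≤ 1 / 2)
include hrd hrs hrs2

theorem covariance_twoPath_eq_zero {t u : Fin n × Fin n × Fin n}
    (hfresh : let S : Set (Fin n) := {t.1, t.2.1, t.2.2}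
      u.1 ∉ S ∧ u.2.1 ∉ S ∨ u.1 ∉ S ∧ u.2.2 ∉ S ∨ u.2.1 ∉ S ∧ u.2.2 ∉ S) :
    cov[twoPath n m rs rd t, twoPath n m rs rd u; gbmMeasure n] = 0 := by
  rw [covariance_eq_sub (memLp_twoPath t 2) (memLp_twoPath u 2)]
  simp only [Pi.mul_apply, mul_comm (twoPath n m rs rd t _)]
  rw [integral_twoPath_mul hrd hrs hrs2 (measurable_twoPath t) (twoPath_nonneg t)
    (dependsOn_twoPath t) hfresh, mul_comm, sub_self]

theorem integral_twoPath_mul_twoPath_le (t u : Fin n × Fin n × Fin n) :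
    ∫ X, twoPath n m rs rd t X * twoPath n m rs rd u X ∂gbmMeasure n ≤ 4 * rs ^ 2 := by
  refine (integral_mono_of_nonneg (ae_of_all _ fun X => ?_)
    ((memLp_twoPath t 1).integrable le_rfl) (ae_of_all _ fun X => ?_)).trans
    (integral_twoPath_le (m := m) hrd hrs hrs2 t)
  · exact mul_nonneg (twoPath_nonneg t X) (twoPath_nonneg u X)
  · exact mul_le_of_le_one_right (twoPath_nonneg t X) (twoPath_le_one u X)

theorem integral_twoPath_mul_twoPath_le_of_fresh {t u : Fin n × Fin n × Fin n}
    (hfresh : let S : Set (Fin n) := {t.1, t.2.1, t.2.2}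
      u.1 ∉ S ∨ u.2.1 ∉ S ∨ u.2.2 ∉ S) :
    ∫ X, twoPath n m rs rd t X * twoPath n m rs rd u X ∂gbmMeasure n ≤ 8 * rs ^ 3 := by
  by_cases hu : u.1 ≠ u.2.1 ∧ u.1 ≠ u.2.2 ∧ u.2.1 ≠ u.2.2
  swap
  · simp only [twoPath, if_neg hu, mul_zero, integral_zero]
    have : 0 ≤ rs := hrd.trans hrs
    positivity
  obtain ⟨a, w, haw, hw, hle⟩ : ∃ a w, a ≠ w ∧ w ∉ ({t.1, t.2.1, t.2.2} : Set (Fin n)) ∧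
      ∀ X, twoPath n m rs rd u X ≤ gbmA n m rs rd X a w := by
    rcases hfresh with h | h | h
    · exact ⟨u.2.1, u.1, hu.1.symm, h, fun X => (twoPath_le_gbmA_left u X).trans_eq (gbmA_comm ..)⟩
    · exact ⟨u.1, u.2.1, hu.1, h, twoPath_le_gbmA_left u⟩
    · exact ⟨u.2.1, u.2.2, hu.2.2, h, twoPath_le_gbmA_right u⟩
  calc ∫ X, twoPath n m rs rd t X * twoPath n m rs rd u X ∂gbmMeasure n
      ≤ ∫ X, gbmA n m rs rd X a w * twoPath n m rs rd t X ∂gbmMeasure n := by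
        refine integral_mono_of_nonneg (ae_of_all _ fun X => ?_) ?_ (ae_of_all _ fun X => ?_)
        · exact mul_nonneg (twoPath_nonneg t X) (twoPath_nonneg u X)
        · exact ((memLp_of_nonneg_of_le_one (measurable_gbmA a w) (fun X => gbmA_nonneg X a w)
            (fun X => gbmA_le_one X a w) 2).integrable_mul (memLp_twoPath t 2))
        · dsimp only
          rw [mul_comm]
          exact mul_le_mul_of_nonneg_right (hle X) (twoPath_nonneg t X)
    _ = 2 * gbmRadius m rs rd a w * ∫ X, twoPath n m rs rd t X ∂gbmMeasure n :=
        integral_gbmA_mul hrd hrs hrs2 haw (measurable_twoPath t) (twoPath_nonneg t)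
          (dependsOn_twoPath t) hw
    _ ≤ 2 * rs * (4 * rs ^ 2) := by
        have : 0 ≤ rs := hrd.trans hrs
        exact mul_le_mul (by linarith [gbmRadius_le (m := m) hrs a w])
          (integral_twoPath_le hrd hrs hrs2 t) (integral_twoPath_nonneg t) (by positivity)
    _ = 8 * rs ^ 3 := by ring

end covariance

def atLeastTwoIn {α : Type*} [Fintype α] [DecidableEq α] (S : Finset α) : Finset (α × α × α) :=
  S ×ˢ S ×ˢ (univ : Finset α) ∪ S ×ˢ (univ : Finset α) ×ˢ S ∪ (univ : Finset α) ×ˢ S ×ˢ S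

theorem card_atLeastTwoIn_le {α : Type*} [Fintype α] [DecidableEq α] (S : Finset α) :
    #(atLeastTwoIn S) ≤ 3 * (#S * #S * Fintype.card α) := by
  unfold atLeastTwoIn
  refine (card_union_le _ _).trans ((Nat.add_le_add_right (card_union_le _ _) _).trans_eq ?_)
  simp only [card_product, card_univ]
  ring

section variance

variable {n m : ℕ} {rs rd : ℝ} (hrd : 0 ≤ rd) (hrs : rd ≤ rs) (hrs2 : rs ≤ 1 / 2)
include hrd hrs hrs2

theorem covariance_twoPath_le (t u : Fin n × Fin n × Fin n) :
    let S : Finset (Fin n) := {t.1, t.2.1, t.2.2}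
    cov[twoPath n m rs rd t, twoPath n m rs rd u; gbmMeasure n]
      ≤ 8 * rs ^ 3 * (if u ∈ atLeastTwoIn S then 1 else 0)
        + 4 * rs ^ 2 * (if u ∈ S ×ˢ S ×ˢ S then 1 else 0) := by
  intro S
  have hrs0 : 0 ≤ rs := hrd.trans hrs
  have hmem : ∀ x, x ∈ S ↔ x ∈ ({t.1, t.2.1, t.2.2} : Set (Fin n)) := fun x => by simp [S]
  simp only [atLeastTwoIn, mem_union, mem_product, mem_univ, and_true, true_and]
  by_cases h2 : u.1 ∈ S ∧ u.2.1 ∈ S ∨ u.1 ∈ S ∧ u.2.2 ∈ S ∨ u.2.1 ∈ S ∧ u.2.2 ∈ S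
  · have hcov := covariance_twoPath_le_integral_mul (m := m) (rs := rs) (rd := rd) t u
    by_cases h3 : u.1 ∈ S ∧ u.2.1 ∈ S ∧ u.2.2 ∈ S
    · have := integral_twoPath_mul_twoPath_le (m := m) hrd hrs hrs2 t u
      rw [if_pos (by tauto), if_pos h3]
      linarith [show 0 ≤ 8 * rs ^ 3 by positivity]
    · have := integral_twoPath_mul_twoPath_le_of_fresh (m := m) hrd hrs hrs2 (t := t) (u := u)
        (by simp only [← hmem]; tauto)
      rw [if_pos (by tauto), if_neg h3]
      linarith
  · rw [covariance_twoPath_eq_zero hrd hrs hrs2 (by simp only [← hmem]; tauto), if_neg (by tauto)]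
    positivity

theorem sum_covariance_twoPath_le (t : Fin n × Fin n × Fin n) :
    ∑ u, cov[twoPath n m rs rd t, twoPath n m rs rd u; gbmMeasure n]
      ≤ 216 * n * rs ^ 3 + 108 * rs ^ 2 := by
  set S : Finset (Fin n) := {t.1, t.2.1, t.2.2}
  have hS : (#S : ℝ) ≤ 3 := by exact_mod_cast card_le_three
  have h2 : (#(atLeastTwoIn S) : ℝ) ≤ 27 * n := by
    have := card_atLeastTwoIn_le S
    rw [Fintype.card_fin] at this
    calc (#(atLeastTwoIn S) : ℝ) ≤ 3 * (#S * #S * n) := by exact_mod_cast this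
      _ ≤ 3 * (3 * 3 * n) := by gcongr
      _ = 27 * n := by ring
  have h3 : (#(S ×ˢ S ×ˢ S) : ℝ) ≤ 27 := by
    rw [card_product, card_product]; push_cast
    calc (#S : ℝ) * (#S * #S) ≤ 3 * (3 * 3) := by gcongr
      _ = 27 := by norm_num
  have hrs0 : 0 ≤ rs := hrd.trans hrs
  calc ∑ u, cov[twoPath n m rs rd t, twoPath n m rs rd u; gbmMeasure n]
      ≤ ∑ u, (8 * rs ^ 3 * (if u ∈ atLeastTwoIn S then 1 else 0)
        + 4 * rs ^ 2 * (if u ∈ S ×ˢ S ×ˢ S then 1 else 0)) :=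
        sum_le_sum fun u _ => covariance_twoPath_le hrd hrs hrs2 t u
    _ = 8 * rs ^ 3 * #(atLeastTwoIn S) + 4 * rs ^ 2 * #(S ×ˢ S ×ˢ S) := by
        simp only [sum_add_distrib, ← mul_sum, sum_boole, filter_mem_eq_inter, univ_inter]
    _ ≤ 8 * rs ^ 3 * (27 * n) + 4 * rs ^ 2 * 27 := by gcongr
    _ = 216 * n * rs ^ 3 + 108 * rs ^ 2 := by ring

end variance

theorem variance_sum_twoPath (n m : ℕ) (rs rd : ℝ) :
    Var[∑ t, twoPath n m rs rd t; gbmMeasure n]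
      = ∫ X, (∑ i : Fin n, ∑ j : Fin n, ∑ k : Fin n,
          if i ≠ j ∧ i ≠ k ∧ j ≠ k then
            gbmA n m rs rd X i j * gbmA n m rs rd X j k
              - ∫ Y, gbmA n m rs rd Y i j * gbmA n m rs rd Y j k ∂gbmMeasure n
          else 0) ^ 2 ∂gbmMeasure n := by
  rw [variance_eq_integral (memLp_finsetSum' _ fun t _ => memLp_twoPath t 2).aemeasurable]
  simp only [Finset.sum_apply]
  rw [integral_finsetSum _ fun t _ => (memLp_twoPath t 1).integrable le_rfl]
  congr with X
  simp only [← sum_sub_distrib, twoPath_sub_integral, Fintype.sum_prod_type]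

/-- Second-moment bound for the centered number of ordered 2-paths: there is an
absolute constant `C > 0` (independent of `n`, `m`/`τ`, `r_s`, `r_d`) such that
`E[P_n²] ≤ C (n⁴ r_s³ + n³ r_s²)` for every geometric block model with
`0 ≤ r_d ≤ r_s ≤ 1/4`. -/
theorem centered_two_paths_variance_bound :
    ∃ C : ℝ, 0 < C ∧
      ∀ (n m : ℕ), m ≤ n → ∀ (rs rd : ℝ), 0 ≤ rd → rd ≤ rs → rs ≤ 1 / 4 →
        (∫ X, (∑ i : Fin n, ∑ j : Fin n, ∑ k : Fin n,
            if i ≠ j ∧ i ≠ k ∧ j ≠ k then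
              gbmA n m rs rd X i j * gbmA n m rs rd X j k
                - ∫ Y, gbmA n m rs rd Y i j * gbmA n m rs rd Y j k ∂gbmMeasure n
            else 0) ^ 2 ∂gbmMeasure n)
          ≤ C * ((n : ℝ) ^ 4 * rs ^ 3 + (n : ℝ) ^ 3 * rs ^ 2) := by
  refine ⟨216, by norm_num, fun n m _ rs rd hrd hrs hrs4 => ?_⟩
  have hrs2 : rs ≤ 1 / 2 := by linarith
  calc _ = Var[∑ t, twoPath n m rs rd t; gbmMeasure n] := (variance_sum_twoPath n m rs rd).symm
    _ = ∑ t, ∑ u, cov[twoPath n m rs rd t, twoPath n m rs rd u; gbmMeasure n] :=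
        variance_sum fun t => memLp_twoPath t 2
    _ ≤ ∑ _t : Fin n × Fin n × Fin n, (216 * n * rs ^ 3 + 108 * rs ^ 2) :=
        sum_le_sum fun t _ => sum_covariance_twoPath_le hrd hrs hrs2 t
    _ = 216 * (n ^ 4 * rs ^ 3) + 108 * (n ^ 3 * rs ^ 2) := by
        simp only [sum_const, card_univ, Fintype.card_prod, Fintype.card_fin, nsmul_eq_mul]
        push_cast; ring
    _ ≤ 216 * ((n : ℝ) ^ 4 * rs ^ 3 + (n : ℝ) ^ 3 * rs ^ 2) := by
        have : (0 : ℝ) ≤ n ^ 3 * rs ^ 2 := by positivity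
        linarith
end
end
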